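/- Let F be a characteristic-zero differential field whose field of constants is algebraically closed, and let E ⊇ F be a no-new-constants differential field extension containing elements x_1,…,x_l with x_i′ ∈ F that are algebraically independent over F. Let S, T ∈ F[x_1,…,x_l] be relatively prime polynomials and assume T has an irreducible factor R ∈ F[x_1,…,x_l] such that R² does not divide T. Then there is no element y ∈ F(x_1,…,x_l) with y′ = S/T. -/

import Mathlib

/-!
Write `y = A/B` in lowest terms and let `δ` be the derivation of `F[x]` induced by `D`. Then
`(δA·B - A·δB)·T = S·B²`; comparing `R`-adic valuations (`R ∥ T`, `R ∤ S`) forces `R ∣ B` and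
then `R ∣ δR`. As `δ` does not raise the total degree, `δR = cR` with `c ∈ F`. At a monomial of
top degree this reads `r' = cr` for the coefficient `r`, so `R(x)/r` is a constant, hence lies in
`F`, and algebraic independence makes `R` constant, contradicting irreducibility.
-/

structure IsDerivation {E : Type*} [Field E] (D : E → E) : Prop where
  map_add : ∀ a b : E, D (a + b) = D a + D b
  leibniz : ∀ a b : E, D (a * b) = D a * b + a * D b

open MvPolynomial

section Derivation

variable {A : Type*} [CommRing A] [IsDomain A] [Algebra ℚ A] (δ : Derivation ℤ A A) {p : A}

theorem Prime.dvd_derivation_of_pow_dvd (hp : Prime p) {k : ℕ} {b : A} (hpb : ¬ p ∣ b)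
    (h : p ^ (k + 1) ∣ δ (p ^ (k + 1) * b)) : p ∣ δ p := by
  have hk : IsUnit ((k + 1 : ℕ) : A) := by
    simpa using (isUnit_iff_ne_zero.mpr (k.cast_add_one_ne_zero : (k : ℚ) + 1 ≠ 0)).map
      (algebraMap ℚ A)
  rw [Derivation.leibniz, Derivation.leibniz_pow, add_tsub_cancel_right, smul_eq_mul, smul_eq_mul,
    smul_eq_mul, nsmul_eq_mul] at h
  have h' : p ^ k * p ∣ p ^ k * (b * (k + 1 : ℕ) * δ p) := by
    rw [← pow_succ]
    convert (dvd_add_right (dvd_mul_right _ _)).mp h using 1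
    push_cast
    ring
  have hp' : p ∣ b * (k + 1 : ℕ) * δ p := (mul_dvd_mul_iff_left (pow_ne_zero k hp.ne_zero)).mp h'
  refine (hp.dvd_or_dvd hp').resolve_left fun hpbk => ?_
  exact (hp.dvd_or_dvd hpbk).elim hpb fun hpk => hp.not_isUnit (isUnit_of_dvd_unit hpk hk)

theorem Prime.dvd_derivation_of_derivation_mul_sub_mul_eq [WfDvdMonoid A] (hp : Prime p)
    {a b s t : A} (hab : IsRelPrime a b) (hst : IsRelPrime s t) (hb : b ≠ 0) (hpt : p ∣ t)
    (hp2 : ¬ p ^ 2 ∣ t) (h : (δ a * b - a * δ b) * t = s * b ^ 2) : p ∣ δ p := by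
  have hps : ¬ p ∣ s := fun hps => hp.not_isUnit (hst hps hpt)
  have hpb : p ∣ b := hp.dvd_of_dvd_pow
    ((hp.dvd_or_dvd (h ▸ dvd_mul_of_dvd_right hpt _)).resolve_left hps)
  have hpa : ¬ p ∣ a := fun hpa => hp.not_isUnit (hab hpa hpb)
  obtain ⟨k, b₀, hpb₀, rfl⟩ := WfDvdMonoid.max_power_factor hb hp.irreducible
  obtain _ | k := k
  · exact absurd (by simpa using hpb) hpb₀
  obtain ⟨t₀, rfl⟩ := hpt
  have hpt₀ : ¬ p ∣ t₀ := fun ⟨c, hc⟩ => hp2 ⟨c, by rw [hc]; ring⟩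
  set W := δ a * (p ^ (k + 1) * b₀) - a * δ (p ^ (k + 1) * b₀)
  -- `p` divides the right-hand side `2 (k + 1)` times but `t` only once
  have hW : p ^ (k + 1) ∣ W := by
    have : p ^ (k + 2) ∣ W * p * t₀ := ⟨s * p ^ k * b₀ ^ 2, by rw [mul_assoc, h]; ring⟩
    have hWp := hp.pow_dvd_of_dvd_mul_right (k + 2) hpt₀ this
    rwa [pow_succ, mul_dvd_mul_iff_right hp.ne_zero] at hWp
  have hδb : p ^ (k + 1) ∣ a * δ (p ^ (k + 1) * b₀) := by
    convert dvd_sub (dvd_mul_of_dvd_right (dvd_mul_right _ b₀) (δ a)) hW using 1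
    ring
  exact hp.dvd_derivation_of_pow_dvd δ hpb₀ (hp.pow_dvd_of_dvd_mul_left _ hpa hδb)

end Derivation

namespace MvPolynomial

variable {σ R : Type*} [CommRing R]

theorem exists_eq_C_mul_of_dvd_of_totalDegree_le [IsDomain R] {p q : MvPolynomial σ R}
    (hp : p ≠ 0) (hpq : p ∣ q) (hdeg : q.totalDegree ≤ p.totalDegree) : ∃ c, q = C c * p := by
  obtain ⟨m, rfl⟩ := hpq
  rcases eq_or_ne m 0 with rfl | hm
  · exact ⟨0, by simp⟩
  rw [totalDegree_mul_of_isDomain hp hm] at hdeg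
  exact ⟨m.coeff 0, by rw [mul_comm, ← totalDegree_eq_zero_iff_eq_C.mp (by omega)]⟩

noncomputable def mapCoeffsAddHom (d : R →+ R) : MvPolynomial σ R →+ MvPolynomial σ R :=
  AddMonoidAlgebra.coeffAddEquiv.symm.toAddMonoidHom.comp
    ((Finsupp.mapRange.addMonoidHom d).comp AddMonoidAlgebra.coeffAddEquiv.toAddMonoidHom)

theorem coeff_mapCoeffsAddHom (d : R →+ R) (p : MvPolynomial σ R) (m : σ →₀ ℕ) :
    coeff m (mapCoeffsAddHom d p) = d (coeff m p) := rfl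

theorem mapCoeffsAddHom_C (d : R →+ R) (a : R) :
    mapCoeffsAddHom d (C a : MvPolynomial σ R) = C (d a) := by
  classical
  ext m
  simp only [coeff_mapCoeffsAddHom, coeff_C]
  split_ifs <;> simp

theorem mapCoeffsAddHom_mul_X (d : R →+ R) (p : MvPolynomial σ R) (i : σ) :
    mapCoeffsAddHom d (p * X i) = mapCoeffsAddHom d p * X i := by
  classical
  ext m
  simp only [coeff_mapCoeffsAddHom, coeff_mul_X']
  split_ifs <;> simp

variable [Fintype σ]

/-- The derivation of `R[X_i]` acting as `d` on coefficients and sending `X i` to `C (v i)`. -/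
noncomputable def extendDeriv (d : R →+ R) (v : σ → R) (p : MvPolynomial σ R) :
    MvPolynomial σ R :=
  mapCoeffsAddHom d p + ∑ i, C (v i) * pderiv i p

theorem extendDeriv_C (d : R →+ R) (v : σ → R) (a : R) :
    extendDeriv d v (C a) = C (d a) := by
  simp [extendDeriv, mapCoeffsAddHom_C]

theorem extendDeriv_add (d : R →+ R) (v : σ → R) (p q : MvPolynomial σ R) :
    extendDeriv d v (p + q) = extendDeriv d v p + extendDeriv d v q := by
  simp only [extendDeriv, map_add, mul_add, Finset.sum_add_distrib]
  abel

theorem extendDeriv_mul_X (d : R →+ R) (v : σ → R) (p : MvPolynomial σ R) (i : σ) :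
    extendDeriv d v (p * X i) = extendDeriv d v p * X i + C (v i) * p := by
  classical
  simp only [extendDeriv, mapCoeffsAddHom_mul_X, Derivation.leibniz, pderiv_X, smul_eq_mul,
    mul_add, Finset.sum_add_distrib, Pi.single_apply, mul_ite, mul_one, mul_zero,
    Finset.sum_ite_eq, Finset.mem_univ, if_true, add_mul, Finset.sum_mul, mul_comm (X i),
    mul_assoc]
  abel

theorem coeff_extendDeriv (d : R →+ R) (v : σ → R) (p : MvPolynomial σ R) (m : σ →₀ ℕ) :
    coeff m (extendDeriv d v p) =
      d (coeff m p) + ∑ i, v i * (coeff (m + Finsupp.single i 1) p * (m i + 1)) := by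
  simp only [extendDeriv, coeff_add, coeff_mapCoeffsAddHom, coeff_sum, coeff_C_mul, coeff_pderiv]

theorem coeff_extendDeriv_of_totalDegree_le (d : R →+ R) (v : σ → R) {p : MvPolynomial σ R}
    {m : σ →₀ ℕ} (hm : p.totalDegree ≤ m.degree) :
    coeff m (extendDeriv d v p) = d (coeff m p) := by
  rw [coeff_extendDeriv, add_eq_left]
  refine Finset.sum_eq_zero fun i _ => ?_
  rw [coeff_eq_zero_of_totalDegree_lt, zero_mul, mul_zero]
  change _ < Finsupp.degree _
  rw [map_add, Finsupp.degree_single]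
  omega

theorem totalDegree_extendDeriv_le (d : R →+ R) (v : σ → R) (p : MvPolynomial σ R) :
    (extendDeriv d v p).totalDegree ≤ p.totalDegree := by
  refine Finset.sup_le fun m hm => not_lt.mp fun hlt => mem_support_iff.mp hm ?_
  rw [coeff_extendDeriv_of_totalDegree_le d v hlt.le, coeff_eq_zero_of_totalDegree_lt hlt,
    map_zero]

end MvPolynomial

theorem AlgebraicIndependent.exists_isRelPrime_div_of_mem_closure {E : Type*} [Field E]
    {F : Subfield E} {σ : Type*} {x : σ → E} (hind : AlgebraicIndependent F x) {y : E}
    (hy : y ∈ Subfield.closure (↑F ∪ Set.range x)) :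
    ∃ a b : MvPolynomial σ F, IsRelPrime a b ∧ b ≠ 0 ∧ y = aeval x a / aeval x b := by
  have hy' : y ∈ IntermediateField.adjoin F (Set.range x) := by
    rwa [← IntermediateField.mem_toSubfield, IntermediateField.adjoin_toSubfield,
      show Set.range (algebraMap F E) = F from Subtype.range_coe]
  obtain ⟨r, s, rfl⟩ := (IntermediateField.mem_adjoin_range_iff F x y).mp hy'
  by_cases hs : s = 0
  · exact ⟨0, 1, isRelPrime_one_right, one_ne_zero, by simp [hs]⟩
  obtain ⟨a, b, c, hab, rfl, rfl⟩ := UniqueFactorizationMonoid.exists_reduced_factors' r s hs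
  refine ⟨a, b, hab, right_ne_zero_of_mul hs, ?_⟩
  have hc : aeval x c ≠ 0 := (map_ne_zero_iff _ hind).mpr (left_ne_zero_of_mul hs)
  rw [map_mul, map_mul, mul_div_mul_left _ _ hc]

namespace IsDerivation

variable {E : Type*} [Field E] {D : E → E}

def toDerivation (hD : IsDerivation D) : Derivation ℤ E E :=
  Derivation.mk' (AddMonoidHom.mk' D hD.map_add).toIntLinearMap fun a b => by
    simp only [AddMonoidHom.coe_toIntLinearMap, AddMonoidHom.mk'_apply, hD.leibniz, smul_eq_mul]
    ring

theorem toDerivation_apply (hD : IsDerivation D) (a : E) : hD.toDerivation a = D a := rfl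

theorem map_div (hD : IsDerivation D) (a b : E) : D (a / b) = (D a * b - a * D b) / b ^ 2 := by
  rw [← hD.toDerivation_apply, Derivation.leibniz_div, smul_eq_mul, smul_eq_mul, smul_eq_mul,
    toDerivation_apply, toDerivation_apply]
  ring

variable (hD : IsDerivation D) {F : Subfield E} (hF : ∀ a ∈ F, D a ∈ F)

def restrict : F →+ F where
  toFun a := ⟨D a, hF a a.2⟩
  map_zero' := Subtype.ext hD.toDerivation.map_zero
  map_add' a b := Subtype.ext (hD.map_add a b)

variable {σ : Type*} [Fintype σ] (x : σ → E) (hx : ∀ i, D (x i) ∈ F)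

theorem apply_aeval (p : MvPolynomial σ F) :
    D (aeval x p) = aeval x (extendDeriv (hD.restrict hF) (fun i => ⟨D (x i), hx i⟩) p) := by
  induction p using MvPolynomial.induction_on with
  | C a => simp only [aeval_C, extendDeriv_C]; rfl
  | add p q hp hq => rw [_root_.map_add, hD.map_add, hp, hq, extendDeriv_add, _root_.map_add]
  | mul_X p i hp =>
    rw [map_mul, aeval_X, hD.leibniz, hp, extendDeriv_mul_X, _root_.map_add, map_mul, map_mul,
      aeval_X, aeval_C, mul_comm _ (aeval x p)]
    rfl

/-- The Leibniz rule is pulled back from `D` along the injective map `aeval x`. -/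
noncomputable def mvPolynomialDerivation (hind : AlgebraicIndependent F x) :
    Derivation ℤ (MvPolynomial σ F) (MvPolynomial σ F) :=
  Derivation.mk' (AddMonoidHom.mk' (extendDeriv (hD.restrict hF) fun i => ⟨D (x i), hx i⟩)
    (extendDeriv_add _ _)).toIntLinearMap fun p q => hind <| by
      simp only [AddMonoidHom.coe_toIntLinearMap, AddMonoidHom.mk'_apply, smul_eq_mul,
        _root_.map_add, map_mul, ← apply_aeval, hD.leibniz]
      ring

theorem mvPolynomialDerivation_apply (hind : AlgebraicIndependent F x) (p : MvPolynomial σ F) :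
    hD.mvPolynomialDerivation hF x hx hind p =
      extendDeriv (hD.restrict hF) (fun i => ⟨D (x i), hx i⟩) p := rfl

theorem derivation_mul_sub_mul_eq_of_apply_div_eq (hind : AlgebraicIndependent F x)
    {a b s t : MvPolynomial σ F} (hb : b ≠ 0) (ht : t ≠ 0)
    (h : D (aeval x a / aeval x b) = aeval x s / aeval x t) :
    (hD.mvPolynomialDerivation hF x hx hind a * b -
      a * hD.mvPolynomialDerivation hF x hx hind b) * t = s * b ^ 2 := by
  have hb' : aeval x b ≠ 0 := (map_ne_zero_iff _ hind).mpr hb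
  have ht' : aeval x t ≠ 0 := (map_ne_zero_iff _ hind).mpr ht
  rw [hD.map_div, div_eq_div_iff (pow_ne_zero 2 hb') ht', apply_aeval hD hF x hx a,
    apply_aeval hD hF x hx b] at h
  apply hind
  simpa only [map_mul, map_sub, map_pow, mvPolynomialDerivation_apply] using h

theorem exists_eq_C_of_extendDeriv_eq_C_mul (hNNC : ∀ a : E, D a = 0 → a ∈ F)
    (hind : AlgebraicIndependent F x) {p : MvPolynomial σ F} (hp : p ≠ 0) {c : F}
    (h : extendDeriv (hD.restrict hF) (fun i => ⟨D (x i), hx i⟩) p = C c * p) :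
    ∃ a, p = C a := by
  obtain ⟨β, hβ, hβdeg⟩ :=
    Finset.exists_mem_eq_sup p.support (support_nonempty.mpr hp) Finsupp.degree
  set r := coeff β p
  have hr : (r : E) ≠ 0 := by simpa using mem_support_iff.mp hβ
  -- at a monomial of top total degree, `extendDeriv` only differentiates the coefficient
  have hDr : D r = c * r := by
    have := congrArg (fun q => ((coeff β q : F) : E)) h
    simp only [coeff_extendDeriv_of_totalDegree_le _ _ hβdeg.le, coeff_C_mul,
      Subfield.coe_mul] at this
    exact this
  have hDp : D (aeval x p) = c * aeval x p := by
    rw [apply_aeval hD hF x hx, h, map_mul, aeval_C]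
    rfl
  have hconst : aeval x p / r ∈ F := hNNC _ (by rw [hD.map_div, hDp, hDr]; ring)
  refine ⟨r * ⟨_, hconst⟩, hind ?_⟩
  rw [aeval_C]
  change aeval x p = r * (aeval x p / r)
  field_simp

end IsDerivation

theorem no_antiderivative_of_simple_irreducible_factor_general
    {E : Type*} [Field E] [CharZero E]
    (D : E → E) (hD : IsDerivation D)
    (F : Subfield E) (hF : ∀ a ∈ F, D a ∈ F)
    (hNNC : ∀ a : E, D a = 0 → a ∈ F)
    {l : ℕ} (x : Fin l → E) (hx : ∀ i, D (x i) ∈ F)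
    (hind : AlgebraicIndependent F x)
    (S T R : MvPolynomial (Fin l) F)
    (hST : IsRelPrime S T)
    (hirr : Irreducible R) (hRT : R ∣ T) (hR2 : ¬ R ^ 2 ∣ T) :
    ¬ ∃ y ∈ Subfield.closure (↑F ∪ Set.range x),
        D y = MvPolynomial.aeval x S / MvPolynomial.aeval x T := by
  rintro ⟨y, hy, hDy⟩
  obtain ⟨A, B, hAB, hB, rfl⟩ := hind.exists_isRelPrime_div_of_mem_closure hy
  have hT : T ≠ 0 := fun hT => hR2 (hT ▸ dvd_zero _)
  have hRδR := hirr.prime.dvd_derivation_of_derivation_mul_sub_mul_eq _ hAB hST hB hRT hR2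
    (hD.derivation_mul_sub_mul_eq_of_apply_div_eq hF x hx hind hB hT hDy)
  obtain ⟨c, hc⟩ := exists_eq_C_mul_of_dvd_of_totalDegree_le hirr.ne_zero hRδR
    (totalDegree_extendDeriv_le _ _ R)
  obtain ⟨a, rfl⟩ := hD.exists_eq_C_of_extendDeriv_eq_C_mul hF x hx hNNC hind hirr.ne_zero hc
  have ha : a ≠ 0 := fun ha => hirr.ne_zero (by rw [ha, map_zero])
  exact hirr.not_isUnit ((isUnit_iff_ne_zero.mpr ha).map C)

/-- Let `F` be a characteristic-zero differential field with algebraically closed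
field of constants, and let `E ⊇ F` be a no-new-constants differential field
extension containing algebraically independent antiderivatives `x₁, …, x_l` of `F`.
Let `S, T ∈ F[x₁,…,x_l]` be relatively prime polynomials such that `T` has an
irreducible factor `R` with `R² ∤ T`.  Then no element `y ∈ F(x₁,…,x_l)` satisfies
`y' = S/T`. -/
theorem no_antiderivative_of_simple_irreducible_factor
    {E : Type*} [Field E] [CharZero E]
    (D : E → E) (hD : IsDerivation D)
    (F : Subfield E) (hF : ∀ a ∈ F, D a ∈ F)
    (C : Subfield E) (hC : ∀ c : E, c ∈ C ↔ (c ∈ F ∧ D c = 0))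
    [IsAlgClosed C]
    (hNNC : ∀ a : E, D a = 0 → a ∈ F)
    {l : ℕ} (x : Fin l → E) (hx : ∀ i, D (x i) ∈ F)
    (hind : AlgebraicIndependent F x)
    (S T R : MvPolynomial (Fin l) F)
    (hST : IsRelPrime S T)
    (hirr : Irreducible R) (hRT : R ∣ T) (hR2 : ¬ R ^ 2 ∣ T) :
    ¬ ∃ y ∈ Subfield.closure (↑F ∪ Set.range x),
        D y = MvPolynomial.aeval x S / MvPolynomial.aeval x T :=
  no_antiderivative_of_simple_irreducible_factor_general D hD F hF hNNC x hx hind S T R hST hirr hRT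
    hR2
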